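/- arXiv:2209.03023 — 2 statements merged into one kernel-verified Lean document; each statement's English description precedes it below -/
import Mathlib

section
/- For Re(s) > 0 large enough, the Lucas zeta function satisfies the identity ζ_U(s) = Σ_{n=1}^∞ U_n^{−s} = D^{s/2} Σ_{k=0}^∞ binom(−s, k) (−1)^k · a^{−s−k} b^k / (1 − a^{−s−k} b^k), where D = (a − b)² and binom(−s,k) denotes the generalized binomial coefficient. -/
/-!
Write `U_{n+1} = (a - b)⁻¹ a^{n+1} (1 - z^{n+1})` with `z = b / a`, so `|z| < 1`. Expanding
`(1 - z^{n+1})^{-s}` by the binomial series turns `U_{n+1}^{-s}` into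
`(a - b)^s ∑_k binom(-s, k) (-1)^k (a^{-s} z^k)^{n+1}`. For `Re s > 0` we have `|a^{-s}| < 1`, the
double series converges absolutely, and summing first over `n` gives geometric series
`∑_n w^{n+1} = w / (1 - w)` with `w = a^{-s} z^k = a^{-s-k} b^k`, a Lambert-type series.
-/

/-- The generalized binomial coefficient `binom(-s, k)`. -/
noncomputable def genBinomNeg (s : ℂ) (k : ℕ) : ℂ :=
  (∏ j ∈ Finset.range k, (-s - j)) / (k.factorial : ℂ)

open Complex

theorem genBinomNeg_eq_choose (s : ℂ) (k : ℕ) : genBinomNeg s k = Ring.choose (-s) k := by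
  rw [Ring.choose_eq_smul, genBinomNeg, ← descPochhammer_eval_eq_prod_range, smul_eq_mul,
    div_eq_inv_mul, ← Polynomial.aeval_eq_smeval, Polynomial.aeval_def,
    Polynomial.eval₂_eq_eval_map, descPochhammer_map]

theorem Complex.hasSum_choose_mul_pow {w z : ℂ} (hz : ‖z‖ < 1) :
    HasSum (fun k ↦ Ring.choose w k * z ^ k) ((1 + z) ^ w) := by
  have hz' : z ∈ Metric.eball (0 : ℂ) 1 := by
    rw [← ENNReal.ofReal_one, Metric.eball_ofReal]
    simpa using hz
  simpa [binomialSeries, FormalMultilinearSeries.ofScalars, mul_comm] using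
    one_add_cpow_hasFPowerSeriesOnBall_zero.hasSum hz'

theorem Complex.summable_norm_choose_mul_pow (w : ℂ) {x : ℝ} (hx0 : 0 ≤ x) (hx1 : x < 1) :
    Summable fun k ↦ ‖Ring.choose w k‖ * x ^ k := by
  lift x to NNReal using hx0
  simpa [binomialSeries, FormalMultilinearSeries.ofScalars_norm] using
    (binomialSeries ℂ w).summable_norm_mul_pow
      ((show (x : ENNReal) < 1 by exact_mod_cast hx1).trans_le binomialSeries_radius_ge_one)

theorem hasSum_genBinomNeg_mul_pow (s : ℂ) {w : ℂ} (hw : ‖w‖ < 1) :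
    HasSum (fun k ↦ genBinomNeg s k * (-1) ^ k * w ^ k) ((1 - w) ^ (-s)) := by
  convert hasSum_choose_mul_pow (w := -s) (z := -w) (by rwa [norm_neg]) using 1
  · ext k
    rw [genBinomNeg_eq_choose, neg_pow w, mul_assoc]
  · rw [sub_eq_add_neg]

theorem summable_norm_genBinomNeg_mul_pow (s : ℂ) {x : ℝ} (hx0 : 0 ≤ x) (hx1 : x < 1) :
    Summable fun k ↦ ‖genBinomNeg s k * (-1) ^ k‖ * x ^ k := by
  simpa [genBinomNeg_eq_choose] using summable_norm_choose_mul_pow (-s) hx0 hx1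

theorem tsum_tsum_mul_pow_succ_eq_tsum_lambert {𝕜 : Type*} [NormedField 𝕜] [CompleteSpace 𝕜]
    {c : ℕ → 𝕜} {u z : 𝕜} (hu : ‖u‖ < 1) (hz : ‖z‖ ≤ 1)
    (hc : Summable fun k ↦ ‖c k‖ * ‖z‖ ^ k) :
    ∑' n : ℕ, ∑' k : ℕ, c k * (u * z ^ k) ^ (n + 1) =
      ∑' k : ℕ, c k * (u * z ^ k / (1 - u * z ^ k)) := by
  set F : ℕ → ℕ → 𝕜 := fun n k ↦ c k * (u * z ^ k) ^ (n + 1)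
  have hbound (p : ℕ × ℕ) :
      ‖Function.uncurry F p‖ ≤ ‖u‖ ^ (p.1 + 1) * (‖c p.2‖ * ‖z‖ ^ p.2) := by
    obtain ⟨n, k⟩ := p
    have hzpow : ‖z‖ ^ (k * (n + 1)) ≤ ‖z‖ ^ k :=
      pow_le_pow_of_le_one (norm_nonneg z) hz (Nat.le_mul_of_pos_right k n.succ_pos)
    calc ‖Function.uncurry F (n, k)‖ = ‖c k‖ * (‖u‖ ^ (n + 1) * ‖z‖ ^ (k * (n + 1))) := by
          simp only [Function.uncurry_apply_pair, F, norm_mul, norm_pow, mul_pow, ← pow_mul]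
      _ ≤ ‖c k‖ * (‖u‖ ^ (n + 1) * ‖z‖ ^ k) := by gcongr
      _ = ‖u‖ ^ (n + 1) * (‖c k‖ * ‖z‖ ^ k) := by ring
  have hgeom : Summable fun n : ℕ ↦ ‖u‖ ^ (n + 1) :=
    (summable_nat_add_iff 1).mpr (summable_geometric_of_lt_one (norm_nonneg u) hu)
  have hsum : Summable (Function.uncurry F) :=
    .of_norm_bounded (hgeom.mul_of_nonneg hc (fun _ ↦ by positivity) (fun _ ↦ by positivity))
      hbound
  have hw (k : ℕ) : ‖u * z ^ k‖ < 1 := by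
    rw [norm_mul, norm_pow]
    exact (mul_le_of_le_one_right (norm_nonneg u) (pow_le_one₀ (norm_nonneg z) hz)).trans_lt hu
  change ∑' n, ∑' k, F n k = _
  rw [← hsum.tsum_comm]
  simp only [F, tsum_mul_left, ← geom_series_mul_shift _ (hw _),
    tsum_geometric_of_norm_lt_one (hw _), div_eq_mul_inv]

theorem Complex.ofReal_pow_cpow {x : ℝ} (hx : 0 ≤ x) (n : ℕ) (w : ℂ) :
    ((x : ℂ) ^ n) ^ w = ((x : ℂ) ^ w) ^ n := by
  have harg : (x : ℂ).arg = 0 := arg_ofReal_of_nonneg hx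
  rw [← cpow_nat_mul' (by simp [harg, Real.pi_pos]) (by simp [harg, Real.pi_pos.le]),
    cpow_nat_mul]

theorem lucas_cpow_neg {a b : ℝ} (hb : |b| < a) (n : ℕ) (s : ℂ) :
    (((a ^ n - b ^ n) / (a - b) : ℝ) : ℂ) ^ (-s) =
      ((a - b : ℝ) : ℂ) ^ s * ((a : ℂ) ^ (-s)) ^ n * (1 - ((b : ℂ) / a) ^ n) ^ (-s) := by
  have ha : 0 < a := (abs_nonneg b).trans_lt hb
  have hab : 0 < a - b := sub_pos.mpr ((le_abs_self b).trans_lt hb)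
  have hq : 0 ≤ 1 - (b / a) ^ n := by
    rw [sub_nonneg]
    refine (le_abs_self _).trans ?_
    rw [abs_pow, abs_div, abs_of_pos ha]
    exact pow_le_one₀ (by positivity) ((div_lt_one ha).mpr hb).le
  have hfactor : (a ^ n - b ^ n) / (a - b) = a ^ n * (1 - (b / a) ^ n) / (a - b) := by
    rw [div_pow]
    field_simp
  rw [hfactor, ofReal_div, div_cpow_ofReal_nonneg (by positivity) hab.le, ofReal_mul,
    mul_cpow_ofReal_nonneg (by positivity) hq, cpow_neg ((a - b : ℝ) : ℂ), ofReal_pow,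
    ofReal_pow_cpow ha.le, ofReal_sub, ofReal_one, ofReal_pow, ofReal_div]
  field_simp

theorem lucas_cpow_neg_eq_tsum {a b : ℝ} (hb : |b| < a) (n : ℕ) (s : ℂ) :
    (((a ^ (n + 1) - b ^ (n + 1)) / (a - b) : ℝ) : ℂ) ^ (-s) =
      ((a - b : ℝ) : ℂ) ^ s *
        ∑' k : ℕ, genBinomNeg s k * (-1) ^ k * ((a : ℂ) ^ (-s) * ((b : ℂ) / a) ^ k) ^ (n + 1) := by
  have ha : 0 < a := (abs_nonneg b).trans_lt hb
  have hz : ‖((b : ℂ) / a) ^ (n + 1)‖ < 1 := by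
    rw [norm_pow, norm_div, norm_real, norm_real, Real.norm_eq_abs, Real.norm_eq_abs,
      abs_of_pos ha]
    exact pow_lt_one₀ (by positivity) ((div_lt_one ha).mpr hb) n.succ_ne_zero
  rw [lucas_cpow_neg hb, mul_assoc, ← (hasSum_genBinomNeg_mul_pow s hz).tsum_eq,
    ← tsum_mul_left]
  congr 2 with k
  ring

theorem lucas_zeta_kamano_expansion_general (a b : ℝ) (ha : 1 < a) (hb : |b| < a)
    (D : ℝ) (hD : D = (a - b) ^ 2) :
    ∃ σ₀ : ℝ, ∀ s : ℂ, σ₀ < s.re →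
      ∑' n : ℕ, (((a ^ (n + 1) - b ^ (n + 1)) / (a - b) : ℝ) : ℂ) ^ (-s) =
        (D : ℂ) ^ (s / 2) * ∑' k : ℕ, genBinomNeg s k * (-1) ^ k *
          ((a : ℂ) ^ (-s - k) * (b : ℂ) ^ (k : ℕ)) /
          (1 - (a : ℂ) ^ (-s - k) * (b : ℂ) ^ (k : ℕ)) := by
  refine ⟨0, fun s hs ↦ ?_⟩
  have ha0 : 0 < a := one_pos.trans ha
  have hu : ‖(a : ℂ) ^ (-s)‖ < 1 := by
    rw [norm_cpow_eq_rpow_re_of_pos ha0, neg_re]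
    exact Real.rpow_lt_one_of_one_lt_of_neg ha (neg_lt_zero.mpr hs)
  have hz : ‖(b : ℂ) / a‖ < 1 := by
    rw [norm_div, norm_real, norm_real, Real.norm_eq_abs, Real.norm_eq_abs, abs_of_pos ha0]
    exact (div_lt_one ha0).mpr hb
  have hDs : (D : ℂ) ^ (s / 2) = ((a - b : ℝ) : ℂ) ^ s := by
    rw [hD, ofReal_pow, ofReal_pow_cpow (sub_nonneg.mpr ((le_abs_self b).trans hb.le)),
      ← cpow_nat_mul]
    push_cast
    ring_nf
  have hw (k : ℕ) : (a : ℂ) ^ (-s - k) * (b : ℂ) ^ k = (a : ℂ) ^ (-s) * ((b : ℂ) / a) ^ k := by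
    rw [cpow_sub _ _ (ofReal_ne_zero.mpr ha0.ne'), cpow_natCast, div_pow]
    ring
  simp_rw [lucas_cpow_neg_eq_tsum hb, tsum_mul_left, tsum_tsum_mul_pow_succ_eq_tsum_lambert hu hz.le
    (summable_norm_genBinomNeg_mul_pow s (norm_nonneg _) hz), hDs, hw, mul_div_assoc]

theorem lucas_zeta_kamano_expansion (a b : ℝ) (ha : 1 < a) (hb : |b| < a) (hb0 : 0 < |b|)
    (D : ℝ) (hD : D = (a - b) ^ 2) :
    ∃ σ₀ : ℝ, ∀ s : ℂ, σ₀ < s.re →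
      ∑' n : ℕ, (((a ^ (n + 1) - b ^ (n + 1)) / (a - b) : ℝ) : ℂ) ^ (-s) =
        (D : ℂ) ^ (s / 2) * ∑' k : ℕ, genBinomNeg s k * (-1) ^ k *
          ((a : ℂ) ^ (-s - k) * (b : ℂ) ^ (k : ℕ)) /
          (1 - (a : ℂ) ^ (-s - k) * (b : ℂ) ^ (k : ℕ)) :=
  lucas_zeta_kamano_expansion_general a b ha hb D hD
end

section
/- Let a > 1, 0 < |b| < a, D = (a−b)², Q = ab > 0, and suppose b = a^{−p/q} for coprime positive integers p, q. Then for k = q k₁ (k₁ ∈ ℕ) and ℓ = k(1 + p/q) ∈ ℕ, the function Z(s) := D^{s/2} binom(−s, k)(−1)^k a^{−s−k} b^k/(1 − a^{−s−k}b^k) has a simple pole at s = −ℓ with residue D^{−ℓ/2} binom(ℓ, k) (−1)^k / log a. -/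
/-!
At `s = -ℓ` the ratio `w(s) = a^{-s-k} b^k` equals `a^{ℓ-k-kp/q} = 1`, so the denominator
`1 - w` has a simple zero there, with derivative `log a · w(-ℓ) = log a`. The numerator is
holomorphic and takes the value `D^{-ℓ/2} binom(ℓ, k) (-1)^k`, since `binom(-s, k)` at `s = -ℓ`
is the ordinary binomial coefficient. The residue is the quotient of the two.
-/

open Filter Topology

@[fun_prop]
theorem continuous_genBinomNeg (k : ℕ) : Continuous (genBinomNeg · k) := by
  unfold genBinomNeg
  fun_prop

theorem genBinomNeg_neg_natCast {n k : ℕ} (hkn : k ≤ n) :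
    genBinomNeg (-(n : ℂ)) k = n.choose k := by
  have hprod : ∏ j ∈ Finset.range k, (-(-(n : ℂ)) - j) = (n.descFactorial k : ℂ) := by
    rw [Nat.descFactorial_eq_prod_range, Nat.cast_prod]
    refine Finset.prod_congr rfl fun j hj => ?_
    rw [Nat.cast_sub ((Finset.mem_range.mp hj).le.trans hkn), neg_neg]
  rw [genBinomNeg, hprod, Nat.descFactorial_eq_factorial_mul_choose, Nat.cast_mul,
    mul_div_cancel_left₀ _ (Nat.cast_ne_zero.mpr (Nat.factorial_ne_zero k))]

theorem tendsto_sub_mul_div_of_hasDerivAt {𝕜 : Type*} [NontriviallyNormedField 𝕜]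
    {f g : 𝕜 → 𝕜} {z g' : 𝕜} (hf : ContinuousAt f z) (hg : HasDerivAt g g' z) (hgz : g z = 0)
    (hg' : g' ≠ 0) :
    Tendsto (fun s => (s - z) * (f s / g s)) (𝓝[≠] z) (𝓝 (f z / g')) := by
  rw [div_eq_mul_inv (f z) g']
  have hslope : Tendsto (fun s => f s * (slope g z s)⁻¹) (𝓝[≠] z) (𝓝 (f z * g'⁻¹)) :=
    (hf.tendsto.mono_left nhdsWithin_le_nhds).mul
      ((hasDerivAt_iff_tendsto_slope.mp hg).inv₀ hg')
  refine hslope.congr fun s => ?_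
  rw [slope_def_field, hgz, sub_zero, inv_div]
  ring

theorem hasDerivAt_one_sub_cpow_neg_sub_mul {c : ℂ} (hc : c ≠ 0) (m d z : ℂ) :
    HasDerivAt (fun s => 1 - c ^ (-s - m) * d) (Complex.log c * (c ^ (-z - m) * d)) z := by
  have h : HasDerivAt (fun s => 1 - c ^ (-s - m) * d)
      (-(c ^ (-z - m) * Complex.log c * (-1) * d)) z :=
    ((((hasDerivAt_neg z).sub_const m).const_cpow (Or.inl hc)).mul_const d).const_sub 1
  exact h.congr_deriv (by ring)

theorem cpow_natCast_sub_mul_rpow_neg_pow_eq_one {a r : ℝ} (ha : 0 < a) {k ℓ : ℕ}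
    (hℓ : (ℓ : ℝ) = k * (1 + r)) :
    (a : ℂ) ^ ((ℓ : ℂ) - k) * ((a ^ (-r) : ℝ) : ℂ) ^ k = 1 := by
  have haC : (a : ℂ) ≠ 0 := Complex.ofReal_ne_zero.mpr ha.ne'
  have hexp : (ℓ : ℂ) - k + k * ((-r : ℝ) : ℂ) = 0 := by
    have : ((ℓ : ℝ) : ℂ) = ((k * (1 + r) : ℝ) : ℂ) := congrArg _ hℓ
    push_cast at this ⊢
    rw [this]
    ring
  rw [Complex.ofReal_cpow ha.le, ← Complex.cpow_nat_mul, ← Complex.cpow_add _ _ haC, hexp,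
    Complex.cpow_zero]

theorem lucas_zeta_term_simple_pole_general (a b : ℝ) (ha : 1 < a) (hb : |b| < a)
    (D : ℝ) (hD : D = (a - b) ^ 2)
    (p q : ℕ)
    (hbval : b = a ^ (-(p / q : ℝ)))
    (k ℓ : ℕ)
    (hℓ : (ℓ : ℝ) = k * (1 + (p : ℝ) / q))
    (Z : ℂ → ℂ)
    (hZ : ∀ s : ℂ, Z s = (D : ℂ) ^ (s / 2) * genBinomNeg s k * (-1) ^ k *
      ((a : ℂ) ^ (-s - k) * (b : ℂ) ^ k) / (1 - (a : ℂ) ^ (-s - k) * (b : ℂ) ^ k)) :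
    Filter.Tendsto (fun s : ℂ => (s + ℓ) * Z s) (nhdsWithin (-(ℓ : ℂ)) {(-(ℓ : ℂ))}ᶜ)
      (nhds ((D : ℂ) ^ (-(ℓ : ℂ) / 2) * (ℓ.choose k) * (-1) ^ k / (Real.log a : ℂ))) := by
  have ha0 : 0 < a := one_pos.trans ha
  have haC : (a : ℂ) ≠ 0 := Complex.ofReal_ne_zero.mpr ha0.ne'
  have hDC : (D : ℂ) ≠ 0 := by
    rw [hD, Complex.ofReal_ne_zero]
    exact pow_ne_zero 2 (sub_ne_zero.mpr (lt_of_le_of_lt (le_abs_self b) hb).ne')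
  have hkℓ : k ≤ ℓ := by
    have : (k : ℝ) ≤ ℓ :=
      hℓ ▸ le_mul_of_one_le_right k.cast_nonneg (le_add_of_nonneg_right (by positivity))
    exact_mod_cast this
  have hpole : (a : ℂ) ^ (-(-(ℓ : ℂ)) - k) * (b : ℂ) ^ k = 1 := by
    rw [neg_neg, hbval]
    exact cpow_natCast_sub_mul_rpow_neg_pow_eq_one ha0 hℓ
  have hDpow : Continuous fun s : ℂ => (D : ℂ) ^ (s / 2) :=
    (continuous_id.div_const 2).const_cpow (Or.inl hDC)
  have hapow : Continuous fun s : ℂ => (a : ℂ) ^ (-s - k) :=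
    (continuous_neg.sub continuous_const).const_cpow (Or.inl haC)
  have hnum : ContinuousAt (fun s : ℂ => (D : ℂ) ^ (s / 2) * genBinomNeg s k * (-1) ^ k *
      ((a : ℂ) ^ (-s - k) * (b : ℂ) ^ k)) (-(ℓ : ℂ)) := by
    fun_prop
  have hden := hasDerivAt_one_sub_cpow_neg_sub_mul haC (k : ℂ) ((b : ℂ) ^ k) (-(ℓ : ℂ))
  rw [hpole, mul_one, ← Complex.ofReal_log ha0.le] at hden
  have hres := tendsto_sub_mul_div_of_hasDerivAt hnum hden (by simp only [hpole, sub_self])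
    (Complex.ofReal_ne_zero.mpr (Real.log_pos ha).ne')
  simp only [hpole, genBinomNeg_neg_natCast hkℓ, mul_one, sub_neg_eq_add] at hres
  simpa only [hZ, mul_div_assoc] using hres

theorem lucas_zeta_term_simple_pole (a b : ℝ) (ha : 1 < a) (hb : |b| < a) (hb0 : 0 < |b|)
    (D : ℝ) (hD : D = (a - b) ^ 2) (hQ : 0 < a * b)
    (p q : ℕ) (hp : 0 < p) (hq : 0 < q) (hpq : Nat.Coprime p q)
    (hbval : b = a ^ (-(p / q : ℝ)))
    (k₁ k ℓ : ℕ) (hk₁ : 0 < k₁) (hk : k = q * k₁)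
    (hℓ : (ℓ : ℝ) = k * (1 + (p : ℝ) / q))
    (Z : ℂ → ℂ)
    (hZ : ∀ s : ℂ, Z s = (D : ℂ) ^ (s / 2) * genBinomNeg s k * (-1) ^ k *
      ((a : ℂ) ^ (-s - k) * (b : ℂ) ^ k) / (1 - (a : ℂ) ^ (-s - k) * (b : ℂ) ^ k)) :
    Filter.Tendsto (fun s : ℂ => (s + ℓ) * Z s) (nhdsWithin (-(ℓ : ℂ)) {(-(ℓ : ℂ))}ᶜ)
      (nhds ((D : ℂ) ^ (-(ℓ : ℂ) / 2) * (ℓ.choose k) * (-1) ^ k / (Real.log a : ℂ))) :=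
  lucas_zeta_term_simple_pole_general a b ha hb D hD p q hbval k ℓ hℓ Z hZ
end
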